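/- arXiv:2509.18702 — 3 statements merged into one kernel-verified Lean document; each statement's English description precedes it below -/
import Mathlib

section
/- Let s = (α, g, β) ∈ S_{G,E} with |α| > |β|. Then: (1) s admits at most one fixed point in E^∞; (2) if s admits a fixed point ζ, then there is a G-circuit (g, γ) such that α = βγ, and ζ = βξ(g, γ), the fixed point constructed from (g, γ). -/
/-- Finite paths in a directed graph: `Pth.nil x` is the length-zero path at the
vertex `x`, and `Pth.cons e p` is the path whose first edge is `e`, followed by `p`. -/
inductive Pth (V : Type) (Ed : Type) : Type where
  | nil : V → Pth V Ed
  | cons : Ed → Pth V Ed → Pth V Ed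

/-- A self-similar graph `(G, E, φ)`: a group `G` acting on a directed graph `E`
(with vertex set `V`, edge set `Ed`, range `r` and source `d`) by graph
automorphisms, together with a one-cocycle `φ : G × E¹ → G` for the action on
edges, satisfying `φ(g,e)·x = g·x` for all vertices `x`. -/
structure SelfSimGraph (G V Ed : Type) [Group G] : Type where
  r : Ed → V
  d : Ed → V
  actV : G → V → V
  actE : G → Ed → Ed
  actV_one : ∀ x, actV 1 x = x
  actV_mul : ∀ g h x, actV (g * h) x = actV g (actV h x)
  actE_one : ∀ e, actE 1 e = e
  actE_mul : ∀ g h e, actE (g * h) e = actE g (actE h e)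
  r_act : ∀ g e, r (actE g e) = actV g (r e)
  d_act : ∀ g e, d (actE g e) = actV g (d e)
  phi : G → Ed → G
  phi_cocycle : ∀ g h e, phi (g * h) e = phi g (actE h e) * phi h e
  phi_vertex : ∀ g e x, actV (phi g e) x = actV g x

variable {G V Ed : Type} [Group G]

/-- The range `r(α)` of a finite path. -/
def rngP (S : SelfSimGraph G V Ed) : Pth V Ed → V
  | Pth.nil x => x
  | Pth.cons e _ => S.r e

/-- The source `d(α)` of a finite path. -/
def srcP (S : SelfSimGraph G V Ed) : Pth V Ed → V
  | Pth.nil x => x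
  | Pth.cons _ p => srcP S p

/-- Well-formedness of a finite path: consecutive edges match, `d(αᵢ) = r(αᵢ₊₁)`. -/
def WFP (S : SelfSimGraph G V Ed) : Pth V Ed → Prop
  | Pth.nil _ => True
  | Pth.cons e p => S.d e = rngP S p ∧ WFP S p

/-- The length of a finite path. -/
def lenP : Pth V Ed → ℕ
  | Pth.nil _ => 0
  | Pth.cons _ p => lenP p + 1

/-- Concatenation `αβ` of finite paths (meaningful when `d(α) = r(β)`). -/
def compP : Pth V Ed → Pth V Ed → Pth V Ed
  | Pth.nil _, q => q
  | Pth.cons e p, q => Pth.cons e (compP p q)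

/-- The action of `G` extended to finite paths:
`g·x = g·x` on vertices and `g·(eα) = (g·e)(φ(g,e)·α)`. -/
def actP (S : SelfSimGraph G V Ed) : G → Pth V Ed → Pth V Ed
  | g, Pth.nil x => Pth.nil (S.actV g x)
  | g, Pth.cons e p => Pth.cons (S.actE g e) (actP S (S.phi g e) p)

/-- The cocycle extended to finite paths:
`φ(g,x) = g` on vertices and `φ(g, eα) = φ(φ(g,e), α)`. -/
def phiP (S : SelfSimGraph G V Ed) : G → Pth V Ed → G
  | g, Pth.nil _ => g
  | g, Pth.cons e p => phiP S (S.phi g e) p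

/-- A path `τ` is strongly fixed by `g` if `g·τ = τ` and `φ(g,τ) = 1`. -/
def StronglyFixed (S : SelfSimGraph G V Ed) (g : G) (τ : Pth V Ed) : Prop :=
  WFP S τ ∧ actP S g τ = τ ∧ phiP S g τ = 1

/-- `(G,E,φ)` is pseudo free if `g·e = e` and `φ(g,e) = 1` imply `g = 1`. -/
def PseudoFree (S : SelfSimGraph G V Ed) : Prop :=
  ∀ (g : G) (e : Ed), S.actE g e = e → S.phi g e = 1 → g = 1

/-- `p` is a prefix (initial segment) of `q`: `q = pε` for some path `ε`. -/
def IsPrefixP (S : SelfSimGraph G V Ed) (p q : Pth V Ed) : Prop :=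
  ∃ ε, WFP S ε ∧ rngP S ε = srcP S p ∧ compP p ε = q

/-- The set `M_g` of minimal strongly fixed paths for `g`: strongly fixed paths
none of whose proper prefixes is strongly fixed. -/
def MinSF (S : SelfSimGraph G V Ed) (g : G) : Set (Pth V Ed) :=
  {μ | StronglyFixed S g μ ∧ ∀ p, IsPrefixP S p μ → p ≠ μ → ¬StronglyFixed S g p}

/-- Well-formedness of an infinite path, viewed as a sequence of edges:
`d(ξᵢ) = r(ξᵢ₊₁)`. -/
def InfWF (S : SelfSimGraph G V Ed) (ξ : ℕ → Ed) : Prop :=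
  ∀ i, S.d (ξ i) = S.r (ξ (i + 1))

/-- The range `r(ξ)` of an infinite path. -/
def rngInf (S : SelfSimGraph G V Ed) (ξ : ℕ → Ed) : V := S.r (ξ 0)

/-- `takeP S ξ n` is the finite path `ξ|ₙ = ξ₁⋯ξₙ` (with `ξ|₀ = r(ξ₁)`). -/
def takeP (S : SelfSimGraph G V Ed) : (ℕ → Ed) → ℕ → Pth V Ed
  | ξ, 0 => Pth.nil (S.r (ξ 0))
  | ξ, n + 1 => Pth.cons (ξ 0) (takeP S (fun i => ξ (i + 1)) n)

/-- Membership of an infinite path in the cylinder `Z(α)`: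
the initial segment of `ξ` of length `|α|` equals `α`. -/
def InZ (S : SelfSimGraph G V Ed) (α : Pth V Ed) (ξ : ℕ → Ed) : Prop :=
  takeP S ξ (lenP α) = α

/-- The infinite path `αξ` obtained by prepending a finite path to an infinite one. -/
def prepSeq : Pth V Ed → (ℕ → Ed) → ℕ → Ed
  | Pth.nil _, ξ, n => ξ n
  | Pth.cons e _, _, 0 => e
  | Pth.cons _ p, ξ, n + 1 => prepSeq p ξ n

/-- Dropping the first `k` edges of an infinite path. -/
def dropSeq (k : ℕ) (ξ : ℕ → Ed) : ℕ → Ed := fun n => ξ (n + k)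

/-- The space `E^∞` of infinite paths. -/
def InfPath (S : SelfSimGraph G V Ed) : Type := {ξ : ℕ → Ed // InfWF S ξ}

/-- The topology of `E^∞`: the subspace topology induced from the product
topology on `(E¹)^ℕ`, `E¹` being discrete.  Its basis consists of the
cylinders `Z(α)`. -/
def infTop (S : SelfSimGraph G V Ed) : TopologicalSpace (InfPath S) :=
  TopologicalSpace.induced (fun ξ => ξ.1)
    (@Pi.topologicalSpace ℕ (fun _ => Ed) (fun _ => ⊥))

/-- Specification of the (unique) action of `G` on `E^∞`: `(g·ξ)|ₙ = g·(ξ|ₙ)`. -/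
def ActSpec (S : SelfSimGraph G V Ed) (act : G → (ℕ → Ed) → ℕ → Ed) : Prop :=
  ∀ (g : G) (ξ : ℕ → Ed) (n : ℕ), takeP S (act g ξ) n = actP S g (takeP S ξ n)

/-- The action of a triple `s = (α, g, β) ∈ S_{G,E}` on `E^∞`: it sends
`βξ ∈ Z(β)` to `α(g·ξ)`. -/
def sActSeq (S : SelfSimGraph G V Ed) (act : G → (ℕ → Ed) → ℕ → Ed)
    (α : Pth V Ed) (g : G) (β : Pth V Ed) (ξ : ℕ → Ed) : ℕ → Ed :=
  prepSeq α (act g (dropSeq (lenP β) ξ))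

/-- The set of fixed points in `E^∞` of the element `s = (α, g, β)` of `S_{G,E}`. -/
def FixSet (S : SelfSimGraph G V Ed) (act : G → (ℕ → Ed) → ℕ → Ed)
    (α : Pth V Ed) (g : G) (β : Pth V Ed) : Set (InfPath S) :=
  {η | InZ S β η.1 ∧ sActSeq S act α g β η.1 = η.1}

/-- A vertex `x` is simple if `r⁻¹(x)` is a singleton. -/
def SimpleVtx (S : SelfSimGraph G V Ed) (x : V) : Prop := ∃! e : Ed, S.r e = x

/-- A path `γ = γ₁⋯γₙ` has no entry if `d(γᵢ)` is simple for every `i`. -/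
def NoEntry (S : SelfSimGraph G V Ed) : Pth V Ed → Prop
  | Pth.nil _ => True
  | Pth.cons e p => SimpleVtx S (S.d e) ∧ NoEntry S p

/-- A circuit: a path `γ` of nonzero length with `d(γ) = r(γ)`. -/
def Circuit (S : SelfSimGraph G V Ed) (γ : Pth V Ed) : Prop :=
  WFP S γ ∧ 1 ≤ lenP γ ∧ srcP S γ = rngP S γ

/-- A `G`-circuit: a pair `(g,γ)` with `γ` of nonzero length and `d(γ) = g·r(γ)`. -/
def GCircuit (S : SelfSimGraph G V Ed) (g : G) (γ : Pth V Ed) : Prop :=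
  WFP S γ ∧ 1 ≤ lenP γ ∧ srcP S γ = S.actV g (rngP S γ)

/-- `g` is slack at `x` if all sufficiently long paths with range `x` are
strongly fixed by `g`. -/
def SlackAt (S : SelfSimGraph G V Ed) (g : G) (x : V) : Prop :=
  ∃ n : ℕ, ∀ γ, WFP S γ → rngP S γ = x → n ≤ lenP γ → StronglyFixed S g γ

/-- The sequence `(γⁿ, gₙ)` attached to a `G`-circuit `(g, γ)`:
`γ¹ = γ`, `g₁ = g`, `γⁿ⁺¹ = gₙ·γⁿ`, `gₙ₊₁ = φ(gₙ, γⁿ)` (indexed from `0`). -/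
def circIter (S : SelfSimGraph G V Ed) (g : G) (γ : Pth V Ed) : ℕ → Pth V Ed × G
  | 0 => (γ, g)
  | n + 1 =>
      (actP S (circIter S g γ n).2 (circIter S g γ n).1,
       phiP S (circIter S g γ n).2 (circIter S g γ n).1)

/-- The finite concatenation `γ¹γ²⋯γⁿ`. -/
def circConcat (S : SelfSimGraph G V Ed) (g : G) (γ : Pth V Ed) : ℕ → Pth V Ed
  | 0 => Pth.nil (rngP S γ)
  | n + 1 => compP (circConcat S g γ n) (circIter S g γ n).1

/-- `ξ` is the infinite concatenation `ξ(g,γ) = γ¹γ²γ³⋯`: it is an infinite path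
whose initial segments are the finite concatenations `γ¹⋯γⁿ`. -/
def IsCircPath (S : SelfSimGraph G V Ed) (g : G) (γ : Pth V Ed) (ξ : ℕ → Ed) : Prop :=
  InfWF S ξ ∧ ∀ n, takeP S ξ (lenP (circConcat S g γ n)) = circConcat S g γ n

/-- `x ⇀ y`: there is a finite path with source `x` and range `y`. -/
def RelPath (S : SelfSimGraph G V Ed) (x y : V) : Prop :=
  ∃ α, WFP S α ∧ srcP S α = x ∧ rngP S α = y

/-- `x ∼ y`: `x` and `y` are in the same `G`-orbit. -/
def RelOrb (S : SelfSimGraph G V Ed) (x y : V) : Prop :=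
  ∃ g : G, S.actV g x = y

/-- `x ≫ y`: there is a vertex `u` with `x ⇀ u ∼ y`. -/
def RelGG (S : SelfSimGraph G V Ed) (x y : V) : Prop :=
  ∃ u, RelPath S x u ∧ RelOrb S u y

/-- A nonzero element `(α, g, β)` of `S_{G,E}`: `α, β ∈ E*`, `g ∈ G`, with
`d(α) = g·d(β)`. -/
def SGETriple (S : SelfSimGraph G V Ed) : Type :=
  {t : Pth V Ed × G × Pth V Ed //
    WFP S t.1 ∧ WFP S t.2.2 ∧ srcP S t.1 = S.actV t.2.1 (srcP S t.2.2)}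

/-- The inverse semigroup `S_{G,E}` (as a set): the triples together with `0 = none`. -/
def SGE (S : SelfSimGraph G V Ed) : Type := Option (SGETriple S)

/-- Forget the membership proofs. -/
def sgeToRaw (S : SelfSimGraph G V Ed) : SGE S → Option (Pth V Ed × G × Pth V Ed) :=
  Option.map Subtype.val

/-- The adjoint: `(α, g, β)* = (β, g⁻¹, α)`, `0* = 0`. -/
def starSGE (S : SelfSimGraph G V Ed) : SGE S → SGE S
  | none => none
  | some s =>
      some ⟨(s.1.2.2, s.1.2.1⁻¹, s.1.1),
        ⟨s.2.2.1, s.2.1, by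
          rw [s.2.2.2, ← S.actV_mul, inv_mul_cancel, S.actV_one]⟩⟩

/-- The idempotent `f_α = (α, 1, α)`. -/
def fIdem (S : SelfSimGraph G V Ed) (α : Pth V Ed) (h : WFP S α) : SGE S :=
  some ⟨(α, 1, α), ⟨h, h, by rw [S.actV_one]⟩⟩

/-- Specification of the multiplication of `S_{G,E}`:
`0` is absorbing; `(α,g,β)(γ,h,δ) = (α(g·ε), φ(g,ε)h, δ)` if `γ = βε`;
`(α,g,β)(γ,h,δ) = (α, gφ(h⁻¹,ε)⁻¹, δ(h⁻¹·ε))` if `β = γε`; `0` otherwise. -/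
def MulSpec (S : SelfSimGraph G V Ed) (mul : SGE S → SGE S → SGE S) : Prop :=
  (∀ t, mul none t = none) ∧
  (∀ s, mul s none = none) ∧
  (∀ (s t : SGETriple S) (ε : Pth V Ed),
     WFP S ε → rngP S ε = srcP S s.1.2.2 → t.1.1 = compP s.1.2.2 ε →
       sgeToRaw S (mul (some s) (some t)) =
         some (compP s.1.1 (actP S s.1.2.1 ε), phiP S s.1.2.1 ε * t.1.2.1, t.1.2.2)) ∧
  (∀ (s t : SGETriple S) (ε : Pth V Ed),
     WFP S ε → rngP S ε = srcP S t.1.1 → s.1.2.2 = compP t.1.1 ε →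
       sgeToRaw S (mul (some s) (some t)) =
         some (s.1.1, s.1.2.1 * (phiP S t.1.2.1⁻¹ ε)⁻¹,
               compP t.1.2.2 (actP S t.1.2.1⁻¹ ε))) ∧
  (∀ (s t : SGETriple S),
     (¬∃ ε, WFP S ε ∧ rngP S ε = srcP S s.1.2.2 ∧ t.1.1 = compP s.1.2.2 ε) →
     (¬∃ ε, WFP S ε ∧ rngP S ε = srcP S t.1.1 ∧ s.1.2.2 = compP t.1.1 ε) →
       mul (some s) (some t) = none)

/-- Topological freeness of the standard action of `S_{G,E}` on `E^∞`: for every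
nonzero `s = (α, g, β)`, every interior fixed point `ζ` of `s` satisfies `α = β`
and `ζ ∈ Z(ατ)` for some `τ` strongly fixed by `g`. -/
def TopFree (S : SelfSimGraph G V Ed) (act : G → (ℕ → Ed) → ℕ → Ed) : Prop :=
  ∀ (α : Pth V Ed) (g : G) (β : Pth V Ed),
    WFP S α → WFP S β → srcP S α = S.actV g (srcP S β) →
    ∀ ζ : InfPath S, ζ ∈ @interior (InfPath S) (infTop S) (FixSet S act α g β) →
      α = β ∧ ∃ τ : Pth V Ed, WFP S τ ∧ rngP S τ = srcP S α ∧
        StronglyFixed S g τ ∧ InZ S (compP α τ) ζ.1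

/-! ### Auxiliary lemmas for `statement12` -/

/-- The `i`-th edge of a finite path, if it exists. -/
def ssgEdgeAt : Pth V Ed → ℕ → Option Ed
  | Pth.nil _, _ => none
  | Pth.cons e _, 0 => some e
  | Pth.cons _ p, i + 1 => ssgEdgeAt p i

theorem ssg_edgeAt_take (S : SelfSimGraph G V Ed) :
    ∀ (n i : ℕ) (σ : ℕ → Ed), i < n → ssgEdgeAt (takeP S σ n) i = some (σ i) := by
  intro n
  induction n with
  | zero => intro i σ h; omega
  | succ n ih =>
    intro i σ h
    cases i with
    | zero => rfl
    | succ i => exact ih i (fun j => σ (j + 1)) (by omega)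

theorem ssg_lenP_take (S : SelfSimGraph G V Ed) :
    ∀ (n : ℕ) (σ : ℕ → Ed), lenP (takeP S σ n) = n := by
  intro n
  induction n with
  | zero => intro σ; rfl
  | succ n ih =>
    intro σ
    show lenP (takeP S (fun i => σ (i + 1)) n) + 1 = n + 1
    rw [ih]

theorem ssg_edgeAt_none :
    ∀ (p : Pth V Ed) (i : ℕ), lenP p ≤ i → ssgEdgeAt p i = none := by
  intro p
  induction p with
  | nil x => intro i _; rfl
  | cons e p ih =>
    intro i hi
    cases i with
    | zero => exact absurd hi (by simp only [lenP]; omega)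
    | succ i => exact ih i (by simp only [lenP] at hi; omega)

theorem ssg_take_eq_entry (S : SelfSimGraph G V Ed) {n : ℕ} {σ₁ σ₂ : ℕ → Ed}
    (h : takeP S σ₁ n = takeP S σ₂ n) {i : ℕ} (hi : i < n) : σ₁ i = σ₂ i := by
  have h1 := ssg_edgeAt_take S n i σ₁ hi
  have h2 := ssg_edgeAt_take S n i σ₂ hi
  rw [h] at h1
  rw [h2] at h1
  exact (Option.some.inj h1).symm

theorem ssg_seq_ext (S : SelfSimGraph G V Ed) {σ₁ σ₂ : ℕ → Ed} (c : ℕ)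
    (h : ∀ j, takeP S σ₁ (c + j) = takeP S σ₂ (c + j)) : σ₁ = σ₂ := by
  funext i
  exact ssg_take_eq_entry S (h (i + 1)) (by omega)

theorem ssg_edgeAt_take_congr (S : SelfSimGraph G V Ed) {n : ℕ} {σ₁ σ₂ : ℕ → Ed}
    (h : ∀ j, j < n → σ₁ j = σ₂ j) :
    ∀ i, ssgEdgeAt (takeP S σ₁ n) i = ssgEdgeAt (takeP S σ₂ n) i := by
  intro i
  rcases Nat.lt_or_ge i n with hi | hi
  · rw [ssg_edgeAt_take S n i σ₁ hi, ssg_edgeAt_take S n i σ₂ hi, h i hi]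
  · rw [ssg_edgeAt_none _ i (by rw [ssg_lenP_take]; exact hi),
      ssg_edgeAt_none _ i (by rw [ssg_lenP_take]; exact hi)]

theorem ssg_edgeAt_actP (S : SelfSimGraph G V Ed) :
    ∀ (p q : Pth V Ed) (g : G), (∀ i, ssgEdgeAt p i = ssgEdgeAt q i) →
      ∀ i, ssgEdgeAt (actP S g p) i = ssgEdgeAt (actP S g q) i := by
  intro p
  induction p with
  | nil x =>
    intro q g h i
    cases q with
    | nil y => rfl
    | cons f q' => exact absurd (h 0) (by simp [ssgEdgeAt])
  | cons e p ih =>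
    intro q g h i
    cases q with
    | nil y => exact absurd (h 0) (by simp [ssgEdgeAt])
    | cons f q' =>
      have he : e = f := by have h0 := h 0; simpa [ssgEdgeAt] using h0
      subst he
      cases i with
      | zero => rfl
      | succ i => exact ih q' (S.phi g e) (fun j => h (j + 1)) i

theorem ssg_act_entry_congr (S : SelfSimGraph G V Ed) {act : G → (ℕ → Ed) → ℕ → Ed}
    (hact : ActSpec S act) (g : G) {σ₁ σ₂ : ℕ → Ed} (n : ℕ)
    (h : ∀ j, j < n + 1 → σ₁ j = σ₂ j) : act g σ₁ n = act g σ₂ n := by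
  have e1 := ssg_edgeAt_take S (n + 1) n (act g σ₁) (Nat.lt_succ_self n)
  have e2 := ssg_edgeAt_take S (n + 1) n (act g σ₂) (Nat.lt_succ_self n)
  rw [hact g σ₁ (n + 1)] at e1
  rw [hact g σ₂ (n + 1)] at e2
  have e3 := ssg_edgeAt_actP S _ _ g (ssg_edgeAt_take_congr S h) n
  rw [e1, e2] at e3
  exact Option.some.inj e3

theorem ssg_take_prep (S : SelfSimGraph G V Ed) :
    ∀ (p : Pth V Ed) (σ : ℕ → Ed) (j : ℕ),
      takeP S (prepSeq p σ) (lenP p + j) = compP p (takeP S σ j) := by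
  intro p
  induction p with
  | nil x =>
    intro σ j
    have h1 : prepSeq (Pth.nil x : Pth V Ed) σ = σ := funext fun _ => rfl
    rw [h1]
    show takeP S σ (0 + j) = takeP S σ j
    rw [Nat.zero_add]
  | cons e p ih =>
    intro σ j
    rw [show lenP (Pth.cons e p : Pth V Ed) + j = (lenP p + j) + 1 from by
      simp only [lenP]; omega]
    show Pth.cons e (takeP S (prepSeq p σ) (lenP p + j)) =
      Pth.cons e (compP p (takeP S σ j))
    rw [ih σ j]

theorem ssg_drop_prep :
    ∀ (p : Pth V Ed) (σ : ℕ → Ed), dropSeq (lenP p) (prepSeq p σ) = σ := by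
  intro p
  induction p with
  | nil x => intro σ; funext n; rfl
  | cons e p ih =>
    intro σ
    funext n
    exact congrFun (ih σ) n

theorem ssg_prep_drop (S : SelfSimGraph G V Ed) :
    ∀ (p : Pth V Ed) (η : ℕ → Ed), takeP S η (lenP p) = p →
      prepSeq p (dropSeq (lenP p) η) = η := by
  intro p
  induction p with
  | nil x => intro η _; funext n; rfl
  | cons e p ih =>
    intro η h
    have h' : Pth.cons (η 0) (takeP S (fun i => η (i + 1)) (lenP p)) = Pth.cons e p := h
    injection h' with h1 h2
    funext n
    cases n with
    | zero => exact h1.symm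
    | succ n => exact congrFun (ih (fun i => η (i + 1)) h2) n

theorem ssg_prep_comp :
    ∀ (p q : Pth V Ed) (σ : ℕ → Ed), prepSeq (compP p q) σ = prepSeq p (prepSeq q σ) := by
  intro p
  induction p with
  | nil x => intro q σ; funext n; rfl
  | cons e p ih =>
    intro q σ
    funext n
    cases n with
    | zero => rfl
    | succ n => exact congrFun (ih q σ) n

theorem ssg_srcP_take (S : SelfSimGraph G V Ed) :
    ∀ (n : ℕ) (σ : ℕ → Ed), srcP S (takeP S σ n) = S.r (σ n) := by
  intro n
  induction n with
  | zero => intro σ; rfl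
  | succ n ih => intro σ; exact ih (fun i => σ (i + 1))

theorem ssg_rngP_take (S : SelfSimGraph G V Ed) (σ : ℕ → Ed) :
    ∀ n : ℕ, rngP S (takeP S σ n) = S.r (σ 0) := by
  intro n
  cases n with
  | zero => rfl
  | succ n => rfl

theorem ssg_wfP_take (S : SelfSimGraph G V Ed) :
    ∀ (n : ℕ) (σ : ℕ → Ed), InfWF S σ → WFP S (takeP S σ n) := by
  intro n
  induction n with
  | zero => intro σ _; trivial
  | succ n ih =>
    intro σ h
    refine ⟨?_, ih (fun i => σ (i + 1)) (fun i => h (i + 1))⟩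
    rw [ssg_rngP_take]
    exact h 0

theorem ssg_infWF_drop (S : SelfSimGraph G V Ed) (k : ℕ) {σ : ℕ → Ed}
    (h : InfWF S σ) : InfWF S (dropSeq k σ) := by
  intro i
  show S.d (σ (i + k)) = S.r (σ (i + 1 + k))
  rw [show i + 1 + k = i + k + 1 from by omega]
  exact h (i + k)

theorem ssg_srcP_compP (S : SelfSimGraph G V Ed) :
    ∀ (p q : Pth V Ed), srcP S (compP p q) = srcP S q := by
  intro p
  induction p with
  | nil x => intro q; rfl
  | cons e p ih => intro q; exact ih q

theorem ssg_compP_nil (S : SelfSimGraph G V Ed) :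
    ∀ p : Pth V Ed, compP p (Pth.nil (srcP S p)) = p := by
  intro p
  induction p with
  | nil x => rfl
  | cons e p ih =>
    show Pth.cons e (compP p (Pth.nil (srcP S p))) = Pth.cons e p
    rw [ih]

theorem ssg_phi_one (S : SelfSimGraph G V Ed) (e : Ed) : S.phi 1 e = 1 := by
  have h := S.phi_cocycle 1 1 e
  rw [one_mul, S.actE_one] at h
  exact left_eq_mul.mp h

theorem ssg_actP_one (S : SelfSimGraph G V Ed) : ∀ p : Pth V Ed, actP S 1 p = p := by
  intro p
  induction p with
  | nil x => show Pth.nil (S.actV 1 x) = _; rw [S.actV_one]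
  | cons e p ih =>
    show Pth.cons (S.actE 1 e) (actP S (S.phi 1 e) p) = _
    rw [S.actE_one, ssg_phi_one, ih]

theorem ssg_actP_mul (S : SelfSimGraph G V Ed) :
    ∀ (p : Pth V Ed) (g h : G), actP S (g * h) p = actP S g (actP S h p) := by
  intro p
  induction p with
  | nil x =>
    intro g h
    show Pth.nil (S.actV (g * h) x) = Pth.nil (S.actV g (S.actV h x))
    rw [S.actV_mul]
  | cons e p ih =>
    intro g h
    show Pth.cons (S.actE (g * h) e) (actP S (S.phi (g * h) e) p) =
      Pth.cons (S.actE g (S.actE h e)) (actP S (S.phi g (S.actE h e)) (actP S (S.phi h e) p))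
    rw [S.actE_mul, S.phi_cocycle, ih]

theorem ssg_lenP_actP (S : SelfSimGraph G V Ed) :
    ∀ (p : Pth V Ed) (g : G), lenP (actP S g p) = lenP p := by
  intro p
  induction p with
  | nil x => intro g; rfl
  | cons e p ih =>
    intro g
    show lenP (actP S (S.phi g e) p) + 1 = lenP p + 1
    rw [ih]

theorem ssg_rngP_actP (S : SelfSimGraph G V Ed) (g : G) (p : Pth V Ed) :
    rngP S (actP S g p) = S.actV g (rngP S p) := by
  cases p with
  | nil x => rfl
  | cons e p => exact S.r_act g e

theorem ssg_srcP_actP (S : SelfSimGraph G V Ed) :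
    ∀ (p : Pth V Ed) (g : G), srcP S (actP S g p) = S.actV (phiP S g p) (srcP S p) := by
  intro p
  induction p with
  | nil x => intro g; rfl
  | cons e p ih => intro g; exact ih (S.phi g e)

theorem ssg_actP_compP (S : SelfSimGraph G V Ed) :
    ∀ (p q : Pth V Ed) (g : G),
      actP S g (compP p q) = compP (actP S g p) (actP S (phiP S g p) q) := by
  intro p
  induction p with
  | nil x => intro q g; rfl
  | cons e p ih =>
    intro q g
    show Pth.cons (S.actE g e) (actP S (S.phi g e) (compP p q)) =
      Pth.cons (S.actE g e)
        (compP (actP S (S.phi g e) p) (actP S (phiP S (S.phi g e) p) q))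
    rw [ih]

theorem ssg_act_one (S : SelfSimGraph G V Ed) {act : G → (ℕ → Ed) → ℕ → Ed}
    (hact : ActSpec S act) (σ : ℕ → Ed) : act 1 σ = σ := by
  apply ssg_seq_ext S 0
  intro j
  rw [hact, ssg_actP_one]

theorem ssg_act_mul (S : SelfSimGraph G V Ed) {act : G → (ℕ → Ed) → ℕ → Ed}
    (hact : ActSpec S act) (g h : G) (σ : ℕ → Ed) :
    act (g * h) σ = act g (act h σ) := by
  apply ssg_seq_ext S 0
  intro j
  rw [hact, hact, hact, ssg_actP_mul]

theorem ssg_act_prep (S : SelfSimGraph G V Ed) {act : G → (ℕ → Ed) → ℕ → Ed}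
    (hact : ActSpec S act) (h : G) (p : Pth V Ed) (σ : ℕ → Ed) :
    act h (prepSeq p σ) = prepSeq (actP S h p) (act (phiP S h p) σ) := by
  apply ssg_seq_ext S (lenP p)
  intro j
  rw [hact, ssg_take_prep, ssg_actP_compP, ← hact]
  have hl : lenP p + j = lenP (actP S h p) + j := by rw [ssg_lenP_actP]
  rw [hl, ssg_take_prep]

/-- The product `gₙ ⋯ g₁` of the group elements attached to a `G`-circuit. -/
def ssgKseq (S : SelfSimGraph G V Ed) (g : G) (γ : Pth V Ed) : ℕ → G
  | 0 => 1
  | n + 1 => (circIter S g γ n).2 * ssgKseq S g γ n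

theorem ssg_rng_iter (S : SelfSimGraph G V Ed) (g : G) (γ : Pth V Ed) :
    ∀ n, rngP S (circIter S g γ n).1 = S.actV (ssgKseq S g γ n) (rngP S γ) := by
  intro n
  induction n with
  | zero => show rngP S γ = S.actV 1 (rngP S γ); rw [S.actV_one]
  | succ n ih =>
    show rngP S (actP S (circIter S g γ n).2 (circIter S g γ n).1) = _
    rw [ssg_rngP_actP, ih, ← S.actV_mul]
    rfl

theorem ssg_src_iter (S : SelfSimGraph G V Ed) (g : G) (γ : Pth V Ed)
    (hsrc : srcP S γ = S.actV g (rngP S γ)) :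
    ∀ n, srcP S (circIter S g γ n).1 = S.actV (ssgKseq S g γ (n + 1)) (rngP S γ) := by
  intro n
  induction n with
  | zero =>
    show srcP S γ = S.actV (g * 1) (rngP S γ)
    rw [mul_one]
    exact hsrc
  | succ n ih =>
    show srcP S (actP S (circIter S g γ n).2 (circIter S g γ n).1) = _
    rw [ssg_srcP_actP, ih, ← S.actV_mul]
    rfl

theorem ssg_src_concat (S : SelfSimGraph G V Ed) (g : G) (γ : Pth V Ed)
    (hsrc : srcP S γ = S.actV g (rngP S γ)) :
    ∀ n, srcP S (circConcat S g γ n) = S.actV (ssgKseq S g γ n) (rngP S γ) := by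
  intro n
  cases n with
  | zero => show rngP S γ = S.actV 1 (rngP S γ); rw [S.actV_one]
  | succ n =>
    show srcP S (compP (circConcat S g γ n) (circIter S g γ n).1) = _
    rw [ssg_srcP_compP, ssg_src_iter S g γ hsrc n]

theorem ssg_circC (S : SelfSimGraph G V Ed) {act : G → (ℕ → Ed) → ℕ → Ed}
    (hact : ActSpec S act) (g : G) (γ : Pth V Ed) (ξ : ℕ → Ed)
    (hfix : prepSeq γ (act g ξ) = ξ) :
    ∀ n, act (ssgKseq S g γ n) ξ =
      prepSeq (circIter S g γ n).1 (act (ssgKseq S g γ (n + 1)) ξ) := by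
  intro n
  induction n with
  | zero =>
    show act 1 ξ = prepSeq γ (act (g * 1) ξ)
    rw [mul_one, ssg_act_one S hact]
    exact hfix.symm
  | succ n ih =>
    show act ((circIter S g γ n).2 * ssgKseq S g γ n) ξ = _
    rw [ssg_act_mul S hact, ih, ssg_act_prep S hact]
    show prepSeq (circIter S g γ (n + 1)).1
        (act (circIter S g γ (n + 1)).2 (act (ssgKseq S g γ (n + 1)) ξ)) =
      prepSeq (circIter S g γ (n + 1)).1 (act (ssgKseq S g γ (n + 2)) ξ)
    rw [← ssg_act_mul S hact]
    rfl

theorem ssg_circD (S : SelfSimGraph G V Ed) {act : G → (ℕ → Ed) → ℕ → Ed}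
    (hact : ActSpec S act) (g : G) (γ : Pth V Ed) (ξ : ℕ → Ed)
    (hfix : prepSeq γ (act g ξ) = ξ) :
    ∀ n, prepSeq (circConcat S g γ n) (act (ssgKseq S g γ n) ξ) = ξ := by
  intro n
  induction n with
  | zero =>
    have h1 : act (ssgKseq S g γ 0) ξ = ξ := ssg_act_one S hact ξ
    funext i
    exact congrFun h1 i
  | succ n ih =>
    show prepSeq (compP (circConcat S g γ n) (circIter S g γ n).1)
        (act (ssgKseq S g γ (n + 1)) ξ) = ξ
    rw [ssg_prep_comp, ← ssg_circC S hact g γ ξ hfix n]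
    exact ih

theorem ssg_circ_take (S : SelfSimGraph G V Ed) {act : G → (ℕ → Ed) → ℕ → Ed}
    (hact : ActSpec S act) (g : G) (γ : Pth V Ed) (ξ : ℕ → Ed)
    (hsrc : srcP S γ = S.actV g (rngP S γ))
    (hrng : S.r (ξ 0) = rngP S γ)
    (hfix : prepSeq γ (act g ξ) = ξ) :
    ∀ n, takeP S ξ (lenP (circConcat S g γ n)) = circConcat S g γ n := by
  intro n
  conv_lhs => rw [← ssg_circD S hact g γ ξ hfix n]
  have h1 := ssg_take_prep S (circConcat S g γ n) (act (ssgKseq S g γ n) ξ) 0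
  rw [Nat.add_zero] at h1
  rw [h1]
  have h2 : takeP S (act (ssgKseq S g γ n) ξ) 0 =
      Pth.nil (srcP S (circConcat S g γ n)) := by
    have h3 : (Pth.nil (S.r (act (ssgKseq S g γ n) ξ 0)) : Pth V Ed) =
        Pth.nil (S.actV (ssgKseq S g γ n) (S.r (ξ 0))) := hact (ssgKseq S g γ n) ξ 0
    injection h3 with h4
    show Pth.nil (S.r (act (ssgKseq S g γ n) ξ 0)) = _
    rw [h4, hrng, ← ssg_src_concat S g γ hsrc n]
  rw [h2]
  exact ssg_compP_nil S (circConcat S g γ n)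

theorem ssg_fixed_take (S : SelfSimGraph G V Ed) (α : Pth V Ed) (g : G) (β : Pth V Ed)
    (hmem : srcP S α = S.actV g (srcP S β))
    (act : G → (ℕ → Ed) → ℕ → Ed) (hact : ActSpec S act)
    (ζ : ℕ → Ed) (hz : InZ S β ζ) (hfix : sActSeq S act α g β ζ = ζ) :
    takeP S ζ (lenP α) = α := by
  have hz' : takeP S ζ (lenP β) = β := hz
  have h3 : (Pth.nil (S.r (act g (dropSeq (lenP β) ζ) 0)) : Pth V Ed) =
      Pth.nil (S.actV g (S.r (dropSeq (lenP β) ζ 0))) := hact g (dropSeq (lenP β) ζ) 0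
  injection h3 with h4
  have h5 : S.r (ζ (lenP β)) = srcP S β := by
    conv_rhs => rw [← hz']
    exact (ssg_srcP_take S (lenP β) ζ).symm
  have hrσ : S.r (act g (dropSeq (lenP β) ζ) 0) = srcP S α := by
    rw [h4]
    show S.actV g (S.r (ζ (0 + lenP β))) = srcP S α
    rw [Nat.zero_add, h5, ← hmem]
  have h6 := ssg_take_prep S α (act g (dropSeq (lenP β) ζ)) 0
  rw [Nat.add_zero] at h6
  have h7 : takeP S (sActSeq S act α g β ζ) (lenP α) =
      compP α (takeP S (act g (dropSeq (lenP β) ζ)) 0) := h6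
  rw [← hfix, h7]
  have h8 : takeP S (act g (dropSeq (lenP β) ζ)) 0 = Pth.nil (srcP S α) := by
    show Pth.nil (S.r (act g (dropSeq (lenP β) ζ) 0)) = Pth.nil (srcP S α)
    rw [hrσ]
  rw [h8]
  exact ssg_compP_nil S α

/-- For `s = (α, g, β) ∈ S_{G,E}` with `|α| > |β|`: (1) `s` admits at most one
fixed point in `E^∞`; (2) if `s` admits a fixed point `ζ`, then there is a
`G`-circuit `(g, γ)` with `α = βγ` and `ζ = βξ(g,γ)`. -/
theorem statement12 {G V Ed : Type} [Group G] [Fintype V] [Fintype Ed]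
    (S : SelfSimGraph G V Ed) (hNoSources : ∀ x : V, ∃ e : Ed, S.r e = x)
    (α : Pth V Ed) (g : G) (β : Pth V Ed)
    (hα : WFP S α) (hβ : WFP S β) (hmem : srcP S α = S.actV g (srcP S β))
    (hlen : lenP β < lenP α)
    (act : G → (ℕ → Ed) → ℕ → Ed) (hact : ActSpec S act) :
    (∀ η₁ η₂ : ℕ → Ed, InfWF S η₁ → InfWF S η₂ →
        InZ S β η₁ → sActSeq S act α g β η₁ = η₁ →
        InZ S β η₂ → sActSeq S act α g β η₂ = η₂ → η₁ = η₂) ∧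
    (∀ ζ : ℕ → Ed, InfWF S ζ → InZ S β ζ → sActSeq S act α g β ζ = ζ →
      ∃ (γ : Pth V Ed) (ξ : ℕ → Ed), GCircuit S g γ ∧ α = compP β γ ∧
        IsCircPath S g γ ξ ∧ ζ = prepSeq β ξ) := by
  constructor
  · intro η₁ η₂ _ _ hz1 hf1 hz2 hf2
    have ht1 : takeP S η₁ (lenP α) = α := ssg_fixed_take S α g β hmem act hact η₁ hz1 hf1
    have ht2 : takeP S η₂ (lenP α) = α := ssg_fixed_take S α g β hmem act hact η₂ hz2 hf2
    have hd1 : dropSeq (lenP α) η₁ = act g (dropSeq (lenP β) η₁) := by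
      conv_lhs => rw [← hf1]
      exact ssg_drop_prep α (act g (dropSeq (lenP β) η₁))
    have hd2 : dropSeq (lenP α) η₂ = act g (dropSeq (lenP β) η₂) := by
      conv_lhs => rw [← hf2]
      exact ssg_drop_prep α (act g (dropSeq (lenP β) η₂))
    have key : ∀ i : ℕ, (∀ j, j < i → η₁ j = η₂ j) → η₁ i = η₂ i := by
      intro i ih
      rcases Nat.lt_or_ge i (lenP α) with hi | hi
      · exact ssg_take_eq_entry S (ht1.trans ht2.symm) hi
      · have hkey : act g (dropSeq (lenP β) η₁) (i - lenP α) =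
            act g (dropSeq (lenP β) η₂) (i - lenP α) := by
          apply ssg_act_entry_congr S hact g
          intro j hj
          show η₁ (j + lenP β) = η₂ (j + lenP β)
          exact ih (j + lenP β) (by omega)
        have l1 : η₁ i = act g (dropSeq (lenP β) η₁) (i - lenP α) := by
          rw [← hd1]
          show η₁ i = η₁ (i - lenP α + lenP α)
          congr 1
          omega
        have l2 : η₂ i = act g (dropSeq (lenP β) η₂) (i - lenP α) := by
          rw [← hd2]
          show η₂ i = η₂ (i - lenP α + lenP α)
          congr 1
          omega
        rw [l1, l2, hkey]
    funext i
    induction i using Nat.strong_induction_on with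
    | _ i ih => exact key i ih
  · intro ζ hwf hz hfix
    have hz' : takeP S ζ (lenP β) = β := hz
    have hζβ : prepSeq β (dropSeq (lenP β) ζ) = ζ := ssg_prep_drop S β ζ hz'
    have htα : takeP S ζ (lenP α) = α := ssg_fixed_take S α g β hmem act hact ζ hz hfix
    have hdrop : dropSeq (lenP α) ζ = act g (dropSeq (lenP β) ζ) := by
      conv_lhs => rw [← hfix]
      exact ssg_drop_prep α (act g (dropSeq (lenP β) ζ))
    obtain ⟨j₀, hj₀, hj₁⟩ : ∃ j, lenP α = lenP β + j ∧ 1 ≤ j :=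
      ⟨lenP α - lenP β, by omega, by omega⟩
    have hsplit : takeP S ζ (lenP β + j₀) =
        compP β (takeP S (dropSeq (lenP β) ζ) j₀) := by
      conv_lhs => rw [← hζβ]
      exact ssg_take_prep S β (dropSeq (lenP β) ζ) j₀
    have hαγ : α = compP β (takeP S (dropSeq (lenP β) ζ) j₀) := by
      rw [← hsplit, ← hj₀]
      exact htα.symm
    have hrngγ : rngP S (takeP S (dropSeq (lenP β) ζ) j₀) = srcP S β := by
      rw [ssg_rngP_take]
      show S.r (ζ (0 + lenP β)) = srcP S β
      rw [Nat.zero_add]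
      conv_rhs => rw [← hz']
      exact (ssg_srcP_take S (lenP β) ζ).symm
    have hsrcγ : srcP S (takeP S (dropSeq (lenP β) ζ) j₀) =
        S.actV g (rngP S (takeP S (dropSeq (lenP β) ζ) j₀)) := by
      rw [hrngγ, ← hmem, hαγ, ssg_srcP_compP]
    have hξfix : prepSeq (takeP S (dropSeq (lenP β) ζ) j₀)
        (act g (dropSeq (lenP β) ζ)) = dropSeq (lenP β) ζ := by
      have h5 : takeP S (dropSeq (lenP β) ζ)
          (lenP (takeP S (dropSeq (lenP β) ζ) j₀)) =
          takeP S (dropSeq (lenP β) ζ) j₀ := by rw [ssg_lenP_take]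
      have h6 := ssg_prep_drop S (takeP S (dropSeq (lenP β) ζ) j₀)
        (dropSeq (lenP β) ζ) h5
      have hc : act g (dropSeq (lenP β) ζ) =
          dropSeq (lenP (takeP S (dropSeq (lenP β) ζ) j₀)) (dropSeq (lenP β) ζ) := by
        rw [← hdrop]
        funext n
        show ζ (n + lenP α) =
          ζ (n + lenP (takeP S (dropSeq (lenP β) ζ) j₀) + lenP β)
        rw [ssg_lenP_take]
        congr 1
        omega
      rw [hc]
      exact h6
    refine ⟨takeP S (dropSeq (lenP β) ζ) j₀, dropSeq (lenP β) ζ,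
      ⟨?_, ?_, hsrcγ⟩, hαγ, ⟨?_, ?_⟩, hζβ.symm⟩
    · exact ssg_wfP_take S j₀ _ (ssg_infWF_drop S (lenP β) hwf)
    · rw [ssg_lenP_take]; exact hj₁
    · exact ssg_infWF_drop S (lenP β) hwf
    · exact ssg_circ_take S hact g _ _ hsrcγ
        (ssg_rngP_take S (dropSeq (lenP β) ζ) j₀).symm hξfix
end

section
/- Let (g, γ) be a G-circuit, let β ∈ E* with d(β) = r(γ), and set ζ = βξ(g, γ). Then ζ is an isolated point of E^∞ if and only if γ has no entry. -/
variable {G V Ed : Type} [Group G]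

section Aux

variable {G V Ed : Type} [Group G] (S : SelfSimGraph G V Ed)

lemma phi_one (e : Ed) : S.phi 1 e = 1 := by
  have h := S.phi_cocycle 1 1 e
  rw [one_mul, S.actE_one] at h
  exact (mul_left_cancel (a := S.phi 1 e) (by rw [mul_one, ← h])).symm

lemma actP_one : ∀ p : Pth V Ed, actP S 1 p = p
  | Pth.nil x => by simp [actP, S.actV_one]
  | Pth.cons e p => by simp [actP, S.actE_one, phi_one, actP_one p]

lemma actP_mul : ∀ (g h : G) (p : Pth V Ed),
    actP S (g * h) p = actP S g (actP S h p)
  | g, h, Pth.nil x => by simp [actP, S.actV_mul]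
  | g, h, Pth.cons e p => by
      simp only [actP, S.actE_mul, S.phi_cocycle]
      rw [actP_mul]

lemma simple_act {x : V} (g : G) (hx : SimpleVtx S x) :
    SimpleVtx S (S.actV g x) := by
  obtain ⟨e0, he0, hu⟩ := hx
  refine ExistsUnique.intro (S.actE g e0) (by rw [S.r_act, he0]) (fun e he => ?_)
  have h1 : S.r (S.actE g⁻¹ e) = x := by
    have he' : S.r e = S.actV g x := he
    rw [S.r_act, he', ← S.actV_mul, inv_mul_cancel, S.actV_one]
  have := hu _ h1
  have h2 : S.actE g (S.actE g⁻¹ e) = S.actE g e0 := by rw [this]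
  rwa [← S.actE_mul, mul_inv_cancel, S.actE_one] at h2

lemma noEntry_act : ∀ (g : G) (p : Pth V Ed), NoEntry S p → NoEntry S (actP S g p)
  | g, Pth.nil x, _ => trivial
  | g, Pth.cons e p, h => by
      obtain ⟨h1, h2⟩ := h
      exact ⟨by rw [S.d_act]; exact simple_act S g h1, noEntry_act _ p h2⟩

lemma noEntry_act_iff (g : G) (p : Pth V Ed) :
    NoEntry S (actP S g p) ↔ NoEntry S p := by
  refine ⟨fun h => ?_, noEntry_act S g p⟩
  have := noEntry_act S g⁻¹ _ h
  rwa [← actP_mul, inv_mul_cancel, actP_one] at this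

lemma lenP_act : ∀ (g : G) (p : Pth V Ed), lenP (actP S g p) = lenP p
  | _, Pth.nil _ => rfl
  | g, Pth.cons e p => by simp [actP, lenP, lenP_act _ p]

lemma lenP_comp : ∀ p q : Pth V Ed, lenP (compP p q) = lenP p + lenP q
  | Pth.nil _, q => by simp [compP, lenP]
  | Pth.cons e p, q => by simp [compP, lenP, lenP_comp p q]; omega

/-- list of sources of the edges of a path, in order -/
def dListP (S : SelfSimGraph G V Ed) : Pth V Ed → List V
  | Pth.nil _ => []
  | Pth.cons e p => S.d e :: dListP S p

lemma noEntry_iff : ∀ p : Pth V Ed,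
    (NoEntry S p ↔ ∀ x ∈ dListP S p, SimpleVtx S x)
  | Pth.nil _ => by simp [NoEntry, dListP]
  | Pth.cons e p => by
      simp [NoEntry, dListP, noEntry_iff p]

lemma dList_comp : ∀ p q : Pth V Ed,
    dListP S (compP p q) = dListP S p ++ dListP S q
  | Pth.nil _, q => rfl
  | Pth.cons e p, q => by simp [compP, dListP, dList_comp p q]

lemma dList_length : ∀ p : Pth V Ed, (dListP S p).length = lenP p
  | Pth.nil _ => rfl
  | Pth.cons e p => by simp [dListP, lenP, dList_length p]

lemma lenP_take : ∀ (n : ℕ) (ξ : ℕ → Ed), lenP (takeP S ξ n) = n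
  | 0, _ => rfl
  | n + 1, ξ => by simp [takeP, lenP, lenP_take n]

lemma dList_take_get : ∀ (n : ℕ) (ξ : ℕ → Ed) (j : ℕ), j < n →
    (dListP S (takeP S ξ n))[j]? = some (S.d (ξ j))
  | 0, _, _, h => absurd h (Nat.not_lt_zero _)
  | n + 1, ξ, 0, _ => by simp [takeP, dListP]
  | n + 1, ξ, j + 1, h => by
      simpa [takeP, dListP] using dList_take_get n (fun i => ξ (i + 1)) j
        (Nat.lt_of_succ_lt_succ h)


lemma prep_at : ∀ (p : Pth V Ed) (ξ : ℕ → Ed) (n : ℕ),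
    prepSeq p ξ (lenP p + n) = ξ n
  | Pth.nil _, ξ, n => by simp [prepSeq, lenP]
  | Pth.cons e p, ξ, n => by
      have : lenP (Pth.cons e p) + n = (lenP p + n) + 1 := by simp [lenP]; omega
      rw [this]
      show prepSeq p ξ (lenP p + n) = ξ n
      exact prep_at p ξ n

lemma rng_prep_zero : ∀ (q : Pth V Ed) (ξ : ℕ → Ed),
    srcP S q = S.r (ξ 0) → S.r (prepSeq q ξ 0) = rngP S q
  | Pth.nil x, ξ, h => h.symm
  | Pth.cons e q, ξ, h => rfl

lemma infWF_prep : ∀ (p : Pth V Ed) (ξ : ℕ → Ed), WFP S p →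
    srcP S p = S.r (ξ 0) → InfWF S ξ → InfWF S (prepSeq p ξ)
  | Pth.nil _, ξ, _, _, hξ => hξ
  | Pth.cons e q, ξ, hw, hs, hξ => by
      intro i
      cases i with
      | zero =>
          show S.d e = S.r (prepSeq q ξ 0)
          rw [rng_prep_zero S q ξ hs]
          exact hw.1
      | succ i =>
          show S.d (prepSeq q ξ i) = S.r (prepSeq q ξ (i + 1))
          exact infWF_prep q ξ hw.2 hs hξ i

lemma lenP_circIter (g : G) (γ : Pth V Ed) :
    ∀ n, lenP (circIter S g γ n).1 = lenP γ
  | 0 => rfl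
  | n + 1 => by
      show lenP (actP S _ _) = _
      rw [lenP_act, lenP_circIter g γ n]

lemma lenP_circConcat (g : G) (γ : Pth V Ed) :
    ∀ n, lenP (circConcat S g γ n) = n * lenP γ
  | 0 => by simp [circConcat, lenP]
  | n + 1 => by
      show lenP (compP _ _) = _
      rw [lenP_comp, lenP_circIter, lenP_circConcat g γ n]
      ring

lemma noEntry_circIter_iff (g : G) (γ : Pth V Ed) :
    ∀ n, (NoEntry S (circIter S g γ n).1 ↔ NoEntry S γ)
  | 0 => Iff.rfl
  | n + 1 => by
      show NoEntry S (actP S _ _) ↔ _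
      rw [noEntry_act_iff, noEntry_circIter_iff g γ n]

lemma noEntry_circConcat (g : G) (γ : Pth V Ed) (h : NoEntry S γ) :
    ∀ n, ∀ x ∈ dListP S (circConcat S g γ n), SimpleVtx S x
  | 0 => by simp [circConcat, dListP]
  | n + 1 => by
      show ∀ x ∈ dListP S (compP _ _), _
      rw [dList_comp]
      intro x hx
      rcases List.mem_append.mp hx with h1 | h2
      · exact noEntry_circConcat g γ h n x h1
      · exact (noEntry_iff S _).mp
          ((noEntry_circIter_iff S g γ n).mpr h) x h2

end Aux
/-- Let `(g, γ)` be a `G`-circuit, `β ∈ E*` with `d(β) = r(γ)`, and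
`ζ = βξ(g,γ)`.  Then `ζ` is an isolated point of `E^∞` iff `γ` has no entry. -/
theorem statement13 {G V Ed : Type} [Group G] [Fintype V] [Fintype Ed]
    (S : SelfSimGraph G V Ed) (hNoSources : ∀ x : V, ∃ e : Ed, S.r e = x)
    (g : G) (γ : Pth V Ed) (hγ : GCircuit S g γ)
    (β : Pth V Ed) (hβ : WFP S β) (hcomp : srcP S β = rngP S γ)
    (ξ : ℕ → Ed) (hξ : IsCircPath S g γ ξ) :
    @IsOpen (InfPath S) (infTop S) {η : InfPath S | η.1 = prepSeq β ξ} ↔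
      NoEntry S γ := by
  obtain ⟨hwf, htake⟩ := hξ
  have hL1 : 1 ≤ lenP γ := hγ.2.1
  have htake' : ∀ n, takeP S ξ (n * lenP γ) = circConcat S g γ n := by
    intro n
    have := htake n
    rwa [lenP_circConcat] at this
  -- range of ξ 0
  have hr0 : S.r (ξ 0) = rngP S γ := by
    have h1 := htake' 1
    have h2 : circConcat S g γ 1 = γ := rfl
    rw [h2, one_mul] at h1
    cases γ with
    | nil x => simp [lenP] at hL1
    | cons e p =>
        simp only [lenP, takeP] at h1
        have : ξ 0 = e := (Pth.cons.injEq _ _ _ _ ▸ h1).1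
        rw [this]; rfl
  set ζ : ℕ → Ed := prepSeq β ξ with hζdef
  have hζwf : InfWF S ζ := infWF_prep S β ξ hβ (by rw [hcomp, hr0]) hwf
  have hζat : ∀ j, ζ (lenP β + j) = ξ j := fun j => prep_at β ξ j
  letI tE : TopologicalSpace Ed := ⊥
  haveI : DiscreteTopology Ed := discreteTopology_bot Ed
  have hopen_eq : @IsOpen (InfPath S) (infTop S)
        {η : InfPath S | η.1 = ζ} ↔
      ∃ U : Set (ℕ → Ed), IsOpen U ∧
        (fun η : InfPath S => η.1) ⁻¹' U = {η : InfPath S | η.1 = ζ} :=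
    isOpen_induced_iff
  constructor
  · -- isolated → no entry
    intro hopen
    by_contra hNE
    obtain ⟨U, hU, hpre⟩ := hopen_eq.mp hopen
    have hζU : ζ ∈ U := by
      have : (⟨ζ, hζwf⟩ : InfPath S) ∈ {η : InfPath S | η.1 = ζ} := rfl
      rw [← hpre] at this
      exact this
    obtain ⟨I, u, hIu, hIsub⟩ := isOpen_pi_iff.mp hU ζ hζU
    set N : ℕ := I.sup id + 1 with hN
    -- find a bad position k ≥ N
    have hNEn : ¬ NoEntry S (circIter S g γ N).1 :=
      fun h => hNE ((noEntry_circIter_iff S g γ N).mp h)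
    have hx : ∃ x ∈ dListP S (circIter S g γ N).1, ¬ SimpleVtx S x := by
      by_contra h
      push_neg at h
      exact hNEn ((noEntry_iff S _).mpr h)
    obtain ⟨x, hxmem, hxns⟩ := hx
    obtain ⟨j, hjlt, hjget⟩ := List.mem_iff_getElem.mp hxmem
    have hjL : j < lenP γ := by
      rwa [dList_length, lenP_circIter] at hjlt
    -- the position N * lenP γ + j of ξ has source x
    have hdx : S.d (ξ (N * lenP γ + j)) = x := by
      have h1 := dList_take_get S ((N + 1) * lenP γ) ξ (N * lenP γ + j)
        (by nlinarith)
      rw [htake'] at h1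
      have h2 : circConcat S g γ (N + 1) =
          compP (circConcat S g γ N) (circIter S g γ N).1 := rfl
      rw [h2, dList_comp] at h1
      have hlen : (dListP S (circConcat S g γ N)).length = N * lenP γ := by
        rw [dList_length, lenP_circConcat]
      rw [List.getElem?_append_right (by omega)] at h1
      rw [hlen] at h1
      have h3 : N * lenP γ + j - N * lenP γ = j := by omega
      rw [h3, List.getElem?_eq_getElem hjlt, hjget] at h1
      exact (Option.some.injEq _ _ ▸ h1).symm
    set k : ℕ := lenP β + (N * lenP γ + j) with hk
    have hζk : S.d (ζ k) = x := by rw [hζat, hdx]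
    have h5 : N ≤ N * lenP γ := by
      calc N = N * 1 := (Nat.mul_one N).symm
        _ ≤ N * lenP γ := Nat.mul_le_mul_left N hL1
    have hkN : N ≤ k := by rw [hk]; linarith
    -- pick a different edge into d (ζ k)
    have hrk : S.r (ζ (k + 1)) = S.d (ζ k) := (hζwf k).symm
    have he' : ∃ e', S.r e' = S.d (ζ k) ∧ e' ≠ ζ (k + 1) := by
      by_contra h
      push_neg at h
      refine absurd ?_ (hζk ▸ hxns)
      exact ⟨ζ (k + 1), hrk, fun y hy => h y hy⟩
    obtain ⟨e', he'r, he'ne⟩ := he'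
    choose c hc using hNoSources
    set f : ℕ → Ed := fun m => Nat.rec e' (fun _ prev => c (S.d prev)) m with hf
    set η : ℕ → Ed := fun m => if m ≤ k then ζ m else f (m - k - 1) with hη
    have hηle : ∀ m, m ≤ k → η m = ζ m := by
      intro m hm; simp [hη, hm]
    have hηk1 : η (k + 1) = e' := by
      have h1 : ¬ (k + 1 ≤ k) := by omega
      simp only [hη, h1, if_false]
      have h2 : k + 1 - k - 1 = 0 := by omega
      rw [h2]
      rfl
    have hηwf : InfWF S η := by
      intro i
      rcases lt_trichotomy i k with h | h | h
      · rw [hηle i (le_of_lt h), hηle (i + 1) h]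
        exact hζwf i
      · rw [h, hηle k le_rfl, hηk1, he'r]
      · have h1 : ¬ (i ≤ k) := by omega
        have h2 : ¬ (i + 1 ≤ k) := by omega
        simp only [hη, h1, h2, if_false]
        have h3 : i + 1 - k - 1 = (i - k - 1) + 1 := by omega
        rw [h3]
        exact (hc _).symm
    have hηmem : (⟨η, hηwf⟩ : InfPath S) ∈ {η : InfPath S | η.1 = ζ} := by
      rw [← hpre]
      refine hIsub (fun i hi => ?_)
      have hik : i ≤ k := le_trans (le_trans (Finset.le_sup (f := id) hi) (by omega)) hkN
      show η i ∈ u i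
      rw [hηle i hik]
      exact (hIu i hi).2
    have : η (k + 1) = ζ (k + 1) := congrFun hηmem (k + 1)
    rw [hηk1] at this
    exact he'ne this
  · -- no entry → isolated
    intro hNE
    have hsimp : ∀ j, SimpleVtx S (S.d (ξ j)) := by
      intro j
      have hj : j < (j + 1) * lenP γ := by nlinarith
      have hget := dList_take_get S ((j + 1) * lenP γ) ξ j hj
      rw [htake'] at hget
      exact noEntry_circConcat S g γ hNE (j + 1) _ (List.mem_of_getElem? hget)
    have hsimpζ : ∀ m, lenP β ≤ m → SimpleVtx S (S.d (ζ m)) := by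
      intro m hm
      have h1 : ζ m = ξ (m - lenP β) := by
        have := hζat (m - lenP β)
        rwa [Nat.add_sub_cancel' hm] at this
      rw [h1]
      exact hsimp _
    refine hopen_eq.mpr ⟨Set.pi (↑(Finset.range (lenP β + 1)) : Set ℕ)
      (fun j => {ζ j}), isOpen_set_pi (Finset.finite_toSet _)
      (fun a _ => isOpen_discrete _), ?_⟩
    ext η
    simp only [Set.mem_preimage, Set.mem_pi, Finset.coe_range, Set.mem_Iio,
      Set.mem_singleton_iff, Set.mem_setOf_eq]
    constructor
    · intro hag
      funext m
      induction m with
      | zero => exact hag 0 (by omega)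
      | succ m ih =>
          by_cases hm : m + 1 < lenP β + 1
          · exact hag _ hm
          · have hm' : lenP β ≤ m := by omega
            obtain ⟨e0, he0, hu⟩ := hsimpζ m hm'
            have h1 : S.r (η.1 (m + 1)) = S.d (ζ m) := by
              rw [← ih]; exact (η.2 m).symm
            have h2 : S.r (ζ (m + 1)) = S.d (ζ m) := (hζwf m).symm
            rw [hu _ h1, hu _ h2]
    · intro h m _
      rw [h]
end

section
/- Suppose s := (α, g, α) lies in S_{G,E} and ζ is an interior fixed point for s, i.e. ζ lies in the interior (in E^∞) of the set of fixed points of s. Then there is a finite path γ ∈ E* such that: (1) g·γ = γ; (2) d(α) = r(γ); (3) ζ ∈ Z(αγ); (4) the element h := φ(g, γ) fixes every point of Z(d(γ)). Conversely, if γ ∈ E* satisfies (1), (2) and (4), then every ζ ∈ Z(αγ) is a (necessarily interior) fixed point of s. -/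
variable {G V Ed : Type} [Group G]

section AuxLemmas

lemma lenP_takeP (S : SelfSimGraph G V Ed) (ξ : ℕ → Ed) (n : ℕ) :
    lenP (takeP S ξ n) = n := by
  induction n generalizing ξ with
  | zero => rfl
  | succ n ih => simp [takeP, lenP, ih]

lemma lenP_compP (p q : Pth V Ed) : lenP (compP p q) = lenP p + lenP q := by
  induction p with
  | nil x => simp [compP, lenP]
  | cons e p ih => simp [compP, lenP, ih]; omega

lemma srcP_takeP (S : SelfSimGraph G V Ed) (ξ : ℕ → Ed) (n : ℕ) :
    srcP S (takeP S ξ n) = S.r (ξ n) := by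
  induction n generalizing ξ with
  | zero => rfl
  | succ n ih => simp [takeP, srcP, ih]

lemma rngP_takeP (S : SelfSimGraph G V Ed) (ξ : ℕ → Ed) (n : ℕ) :
    rngP S (takeP S ξ n) = S.r (ξ 0) := by
  cases n <;> rfl

lemma srcP_compP (S : SelfSimGraph G V Ed) (p q : Pth V Ed) :
    srcP S (compP p q) = srcP S q := by
  induction p with
  | nil x => rfl
  | cons e p ih => simpa [compP, srcP] using ih

lemma takeP_add (S : SelfSimGraph G V Ed) (ξ : ℕ → Ed) (m k : ℕ) :
    takeP S ξ (m + k) = compP (takeP S ξ m) (takeP S (dropSeq m ξ) k) := by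
  induction m generalizing ξ with
  | zero => rw [Nat.zero_add]; rfl
  | succ m ih =>
    rw [Nat.succ_add]
    show Pth.cons (ξ 0) (takeP S (fun i => ξ (i + 1)) (m + k)) = _
    rw [ih]
    rfl

lemma takeP_agree (S : SelfSimGraph G V Ed) {ξ ξ' : ℕ → Ed} {n : ℕ}
    (h : takeP S ξ n = takeP S ξ' n) : ∀ i < n, ξ i = ξ' i := by
  induction n generalizing ξ ξ' with
  | zero => intro i hi; omega
  | succ n ih =>
    simp only [takeP, Pth.cons.injEq] at h
    intro i hi
    cases i with
    | zero => exact h.1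
    | succ i => exact ih h.2 i (by omega)

lemma takeP_eq_of_agree (S : SelfSimGraph G V Ed) {ξ ξ' : ℕ → Ed} {n : ℕ}
    (h1 : ∀ i < n, ξ i = ξ' i) (h2 : S.r (ξ n) = S.r (ξ' n)) :
    takeP S ξ n = takeP S ξ' n := by
  induction n generalizing ξ ξ' with
  | zero => simp only [takeP, h2]
  | succ n ih =>
    simp only [takeP]
    rw [h1 0 (by omega)]
    congr 1
    exact ih (fun i hi => h1 (i + 1) (by omega)) h2

lemma eq_of_takeP_eq (S : SelfSimGraph G V Ed) {ξ ξ' : ℕ → Ed}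
    (h : ∀ m, takeP S ξ m = takeP S ξ' m) : ξ = ξ' := by
  funext i
  exact takeP_agree S (h (i + 1)) i (by omega)

lemma dropSeq_prepSeq (p : Pth V Ed) (ξ : ℕ → Ed) :
    dropSeq (lenP p) (prepSeq p ξ) = ξ := by
  induction p generalizing ξ with
  | nil x => funext n; show prepSeq (Pth.nil x) ξ (n + 0) = ξ n; rfl
  | cons e p ih =>
    funext n
    show prepSeq (Pth.cons e p) ξ (n + (lenP p + 1)) = ξ n
    show prepSeq p ξ (n + lenP p) = ξ n
    exact congrFun (ih ξ) n

lemma prepSeq_compP (p q : Pth V Ed) (ξ : ℕ → Ed) :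
    prepSeq (compP p q) ξ = prepSeq p (prepSeq q ξ) := by
  induction p generalizing ξ with
  | nil x => rfl
  | cons e p ih =>
    funext n
    cases n with
    | zero => rfl
    | succ n =>
      show prepSeq (compP p q) ξ n = prepSeq p (prepSeq q ξ) n
      rw [ih]

lemma takeP_prepSeq (S : SelfSimGraph G V Ed) (p : Pth V Ed) (ξ : ℕ → Ed)
    (h : S.r (ξ 0) = srcP S p) :
    takeP S (prepSeq p ξ) (lenP p) = p := by
  induction p generalizing ξ with
  | nil x => show Pth.nil (S.r (ξ 0)) = Pth.nil x; rw [h]; rfl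
  | cons e p ih =>
    show Pth.cons e (takeP S (prepSeq p ξ) (lenP p)) = Pth.cons e p
    rw [ih ξ h]

lemma prepSeq_takeP_dropSeq (S : SelfSimGraph G V Ed) (p : Pth V Ed) (ξ : ℕ → Ed)
    (h : takeP S ξ (lenP p) = p) :
    prepSeq p (dropSeq (lenP p) ξ) = ξ := by
  induction p generalizing ξ with
  | nil x => funext n; show ξ (n + 0) = ξ n; rfl
  | cons e p ih =>
    have h' : ξ 0 = e ∧ takeP S (fun i => ξ (i + 1)) (lenP p) = p := by
      simp only [lenP, takeP, Pth.cons.injEq] at h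
      exact h
    funext n
    cases n with
    | zero => exact h'.1.symm
    | succ n =>
      show prepSeq p (dropSeq (lenP p + 1) ξ) n = ξ (n + 1)
      exact congrFun (ih (fun i => ξ (i + 1)) h'.2) n

lemma r_prepSeq_zero (S : SelfSimGraph G V Ed) (p : Pth V Ed) (ξ : ℕ → Ed)
    (h : S.r (ξ 0) = srcP S p) :
    S.r (prepSeq p ξ 0) = rngP S p := by
  cases p with
  | nil x => exact h
  | cons e p => rfl

lemma infWF_prepSeq (S : SelfSimGraph G V Ed) (p : Pth V Ed) (ξ : ℕ → Ed)
    (hp : WFP S p) (hξ : InfWF S ξ) (h : S.r (ξ 0) = srcP S p) :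
    InfWF S (prepSeq p ξ) := by
  induction p generalizing ξ with
  | nil x => exact hξ
  | cons e p ih =>
    intro i
    cases i with
    | zero =>
      show S.d e = S.r (prepSeq p ξ 0)
      rw [r_prepSeq_zero S p ξ h]
      exact hp.1
    | succ i => exact ih ξ hp.2 hξ h i

lemma infWF_dropSeq (S : SelfSimGraph G V Ed) (k : ℕ) (ξ : ℕ → Ed)
    (h : InfWF S ξ) : InfWF S (dropSeq k ξ) := by
  intro i
  show S.d (ξ (i + k)) = S.r (ξ (i + 1 + k))
  have e : i + 1 + k = (i + k) + 1 := by omega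
  rw [e]
  exact h (i + k)

lemma wfp_takeP (S : SelfSimGraph G V Ed) (ξ : ℕ → Ed) (h : InfWF S ξ) (n : ℕ) :
    WFP S (takeP S ξ n) := by
  induction n generalizing ξ with
  | zero => trivial
  | succ n ih =>
    exact ⟨by rw [rngP_takeP]; exact h 0, ih _ (fun i => h (i + 1))⟩

lemma actP_compP (S : SelfSimGraph G V Ed) (g : G) (p q : Pth V Ed) :
    actP S g (compP p q) = compP (actP S g p) (actP S (phiP S g p) q) := by
  induction p generalizing g with
  | nil x => rfl
  | cons e p ih =>
    show Pth.cons (S.actE g e) (actP S (S.phi g e) (compP p q)) =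
      Pth.cons (S.actE g e)
        (compP (actP S (S.phi g e) p) (actP S (phiP S g (Pth.cons e p)) q))
    rw [ih]
    rfl

lemma compP_cancel {p q q' : Pth V Ed} (h : compP p q = compP p q') : q = q' := by
  induction p with
  | nil x => exact h
  | cons e p ih =>
    simp only [compP, Pth.cons.injEq] at h
    exact ih h.2

lemma compP_split (S : SelfSimGraph G V Ed) {p p' q q' : Pth V Ed}
    (hl : lenP p = lenP p') (h1 : rngP S q = srcP S p) (h2 : rngP S q' = srcP S p')
    (h : compP p q = compP p' q') : p = p' ∧ q = q' := by
  induction p generalizing p' with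
  | nil x =>
    cases p' with
    | nil y =>
      have hq : q = q' := h
      have a1 : rngP S q = x := h1
      have a2 : rngP S q' = y := h2
      have hxy : x = y := by rw [← a1, ← a2, hq]
      exact ⟨by rw [hxy], hq⟩
    | cons e' p' => simp [lenP] at hl
  | cons e p ih =>
    cases p' with
    | nil y => simp [lenP] at hl
    | cons e' p' =>
      simp only [compP, Pth.cons.injEq] at h
      have hl' : lenP p = lenP p' := by simpa [lenP] using hl
      obtain ⟨hp, hq⟩ := ih hl' h1 h2 h.2
      exact ⟨by rw [h.1, hp], hq⟩

lemma fixAux (S : SelfSimGraph G V Ed) (act : G → (ℕ → Ed) → ℕ → Ed)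
    (hact : ActSpec S act) (α γ : Pth V Ed) (g : G)
    (hsrc : srcP S α = rngP S γ) (hgγ : actP S g γ = γ)
    (H4 : ∀ η : ℕ → Ed, InfWF S η → S.r (η 0) = srcP S γ → act (phiP S g γ) η = η)
    (ζ : InfPath S) (hζ : takeP S ζ.1 (lenP α + lenP γ) = compP α γ) :
    ζ ∈ FixSet S act α g α := by
  have hsplit : compP α γ =
      compP (takeP S ζ.1 (lenP α)) (takeP S (dropSeq (lenP α) ζ.1) (lenP γ)) := by
    rw [← hζ]; exact takeP_add S ζ.1 (lenP α) (lenP γ)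
  have hlen : lenP α = lenP (takeP S ζ.1 (lenP α)) := (lenP_takeP S _ _).symm
  have hrng2 : rngP S (takeP S (dropSeq (lenP α) ζ.1) (lenP γ)) =
      srcP S (takeP S ζ.1 (lenP α)) := by
    rw [rngP_takeP, srcP_takeP]
    show S.r (ζ.1 (0 + lenP α)) = S.r (ζ.1 (lenP α))
    rw [Nat.zero_add]
  obtain ⟨hA, hB⟩ := compP_split S hlen hsrc.symm hrng2 hsplit
  have huwf : InfWF S (dropSeq (lenP α) ζ.1) := infWF_dropSeq S _ _ ζ.2
  have hξwf : InfWF S (dropSeq (lenP γ) (dropSeq (lenP α) ζ.1)) :=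
    infWF_dropSeq S _ _ huwf
  have hξr : S.r (dropSeq (lenP γ) (dropSeq (lenP α) ζ.1) 0) = srcP S γ := by
    show S.r (dropSeq (lenP α) ζ.1 (0 + lenP γ)) = srcP S γ
    rw [Nat.zero_add, ← srcP_takeP S (dropSeq (lenP α) ζ.1) (lenP γ), ← hB]
  have hupre : prepSeq γ (dropSeq (lenP γ) (dropSeq (lenP α) ζ.1)) =
      dropSeq (lenP α) ζ.1 :=
    prepSeq_takeP_dropSeq S γ _ hB.symm
  have hfix : act g (dropSeq (lenP α) ζ.1) = dropSeq (lenP α) ζ.1 := by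
    have hk : ∀ j, takeP S (act g (dropSeq (lenP α) ζ.1)) (lenP γ + j) =
        takeP S (dropSeq (lenP α) ζ.1) (lenP γ + j) := by
      intro j
      rw [hact g _ (lenP γ + j), takeP_add S _ (lenP γ) j, ← hB, actP_compP, hgγ,
        ← hact (phiP S g γ) _ j, H4 _ hξwf hξr]
    funext i
    exact takeP_agree S (hk (i + 1)) i (by omega)
  refine ⟨hA.symm, ?_⟩
  show prepSeq α (act g (dropSeq (lenP α) ζ.1)) = ζ.1
  rw [hfix]
  exact prepSeq_takeP_dropSeq S α ζ.1 hA.symm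

lemma exists_basic_nhd (S : SelfSimGraph G V Ed) (U : Set (InfPath S))
    (hU : @IsOpen (InfPath S) (infTop S) U) (ζ : InfPath S) (hζ : ζ ∈ U) (m : ℕ) :
    ∃ n, m ≤ n ∧ ∀ η : InfPath S, (∀ i < n, η.1 i = ζ.1 i) → η ∈ U := by
  letI : TopologicalSpace Ed := ⊥
  have hU' : @IsOpen (InfPath S)
      (TopologicalSpace.induced (fun ξ : InfPath S => ξ.1) Pi.topologicalSpace) U := hU
  obtain ⟨W, hW, hWU⟩ := isOpen_induced_iff.mp hU'
  rw [isOpen_pi_iff] at hW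
  have hζW : ζ.1 ∈ W := by rw [← hWU] at hζ; exact hζ
  obtain ⟨I, u, hu, hsub⟩ := hW ζ.1 hζW
  refine ⟨max m (I.sup id + 1), le_max_left _ _, ?_⟩
  intro η hη
  rw [← hWU]
  apply hsub
  refine Set.mem_pi.mpr fun i hi => ?_
  have hiI : i ∈ I := hi
  have hilt : i < max m (I.sup id + 1) := by
    have := Finset.le_sup (f := id) hiI
    simp only [id] at this
    omega
  show η.1 i ∈ u i
  rw [hη i hilt]
  exact (hu i hiI).2

lemma isOpen_cylinder (S : SelfSimGraph G V Ed) (p : Pth V Ed) (ζ : InfPath S)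
    (hζ : takeP S ζ.1 (lenP p) = p) :
    @IsOpen (InfPath S) (infTop S) {η : InfPath S | takeP S η.1 (lenP p) = p} := by
  letI : TopologicalSpace Ed := ⊥
  haveI : DiscreteTopology Ed := ⟨rfl⟩
  have hW : IsOpen {w : ℕ → Ed | takeP S w (lenP p) = p} := by
    have hchar : {w : ℕ → Ed | takeP S w (lenP p) = p} =
        (⋂ i ∈ Finset.range (lenP p), (fun w : ℕ → Ed => w i) ⁻¹' {ζ.1 i}) ∩
          ((fun w : ℕ → Ed => w (lenP p)) ⁻¹' (S.r ⁻¹' {S.r (ζ.1 (lenP p))})) := by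
      ext w
      simp only [Set.mem_setOf_eq, Set.mem_inter_iff, Set.mem_iInter, Set.mem_preimage,
        Set.mem_singleton_iff, Finset.mem_range]
      constructor
      · intro h
        have h' : takeP S w (lenP p) = takeP S ζ.1 (lenP p) := by rw [h, hζ]
        refine ⟨takeP_agree S h', ?_⟩
        rw [← srcP_takeP S w (lenP p), h', srcP_takeP]
      · rintro ⟨h1, h2⟩
        rw [takeP_eq_of_agree S h1 h2, hζ]
    rw [hchar]
    apply IsOpen.inter
    · exact isOpen_biInter_finset fun i _ =>
        (continuous_apply i).isOpen_preimage _ (isOpen_discrete _)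
    · exact (continuous_apply (lenP p)).isOpen_preimage _ (isOpen_discrete _)
  show @IsOpen (InfPath S)
      (TopologicalSpace.induced (fun ξ : InfPath S => ξ.1) Pi.topologicalSpace)
      ((fun ξ : InfPath S => ξ.1) ⁻¹' {w | takeP S w (lenP p) = p})
  exact isOpen_induced_iff.mpr ⟨_, hW, rfl⟩

end AuxLemmas

/-- For `s := (α, g, α) ∈ S_{G,E}`: if `ζ` is an interior fixed point of `s`,
there is a finite path `γ` with (1) `g·γ = γ`, (2) `d(α) = r(γ)`,
(3) `ζ ∈ Z(αγ)`, and (4) `h := φ(g,γ)` fixes every point of `Z(d(γ))`.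
Conversely, if `γ` satisfies (1), (2) and (4), then every `ζ ∈ Z(αγ)` is a
(necessarily interior) fixed point of `s`. -/
theorem statement16 {G V Ed : Type} [Group G] [Fintype V] [Fintype Ed]
    (S : SelfSimGraph G V Ed) (hNoSources : ∀ x : V, ∃ e : Ed, S.r e = x)
    (α : Pth V Ed) (g : G)
    (hα : WFP S α) (hmem : srcP S α = S.actV g (srcP S α))
    (act : G → (ℕ → Ed) → ℕ → Ed) (hact : ActSpec S act) :
    (∀ ζ : InfPath S,
      ζ ∈ @interior (InfPath S) (infTop S) (FixSet S act α g α) →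
      ∃ γ : Pth V Ed, WFP S γ ∧ actP S g γ = γ ∧ srcP S α = rngP S γ ∧
        InZ S (compP α γ) ζ.1 ∧
        (∀ η : ℕ → Ed, InfWF S η → rngInf S η = srcP S γ →
          act (phiP S g γ) η = η)) ∧
    (∀ γ : Pth V Ed, WFP S γ → actP S g γ = γ → srcP S α = rngP S γ →
      (∀ η : ℕ → Ed, InfWF S η → rngInf S η = srcP S γ →
        act (phiP S g γ) η = η) →
      ∀ ζ : InfPath S, InZ S (compP α γ) ζ.1 →
        ζ ∈ FixSet S act α g α ∧
        ζ ∈ @interior (InfPath S) (infTop S) (FixSet S act α g α)) := by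
  letI : TopologicalSpace (InfPath S) := infTop S
  constructor
  · -- direction 1
    intro ζ hζ
    obtain ⟨n, hn, hP⟩ := exists_basic_nhd S _ isOpen_interior ζ hζ (lenP α)
    have hζfix : ζ ∈ FixSet S act α g α := interior_subset hζ
    have hζα : takeP S ζ.1 (lenP α) = α := hζfix.1
    set k := n - lenP α with hk
    set γ := takeP S (dropSeq (lenP α) ζ.1) k with hγdef
    have hnk : n = lenP α + k := by omega
    have htake : takeP S ζ.1 n = compP α γ := by
      rw [hnk, takeP_add, hζα]
    have hwfγ : WFP S γ := wfp_takeP S _ (infWF_dropSeq S _ _ ζ.2) k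
    have hsrcγ : srcP S α = rngP S γ := by
      have h1 : rngP S γ = S.r (ζ.1 (0 + lenP α)) := rngP_takeP S _ k
      have h2 : srcP S α = S.r (ζ.1 (lenP α)) := by
        have h3 := srcP_takeP S ζ.1 (lenP α)
        rw [hζα] at h3
        exact h3
      rw [h1, h2, Nat.zero_add]
    have hlenγ : lenP γ = k := lenP_takeP S _ _
    have hlenc : lenP (compP α γ) = n := by rw [lenP_compP, hlenγ]; omega
    have hInZ : InZ S (compP α γ) ζ.1 := by
      show takeP S ζ.1 (lenP (compP α γ)) = compP α γ
      rw [hlenc]; exact htake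
    have hsrcc : srcP S (compP α γ) = srcP S γ := srcP_compP S α γ
    have hwfc : WFP S (compP α γ) := by rw [← htake]; exact wfp_takeP S _ ζ.2 n
    have key : ∀ ξ : ℕ → Ed, InfWF S ξ → S.r (ξ 0) = srcP S γ →
        act g (prepSeq γ ξ) = prepSeq γ ξ := by
      intro ξ hξwf hξr
      have hr' : S.r (ξ 0) = srcP S (compP α γ) := by rw [hsrcc]; exact hξr
      have hwfη : InfWF S (prepSeq (compP α γ) ξ) :=
        infWF_prepSeq S _ ξ hwfc hξwf hr'
      have htakeη : takeP S (prepSeq (compP α γ) ξ) n = compP α γ := by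
        have h := takeP_prepSeq S (compP α γ) ξ hr'
        rwa [hlenc] at h
      have hagree : ∀ i < n, (prepSeq (compP α γ) ξ) i = ζ.1 i := by
        apply takeP_agree S
        rw [htakeη, htake]
      have hmemfix0 := hP ⟨prepSeq (compP α γ) ξ, hwfη⟩ hagree
      have hmemfix := interior_subset hmemfix0
      have h2 : prepSeq α (act g (dropSeq (lenP α) (prepSeq (compP α γ) ξ))) =
          prepSeq (compP α γ) ξ := hmemfix.2
      rw [prepSeq_compP α γ ξ] at h2
      rw [dropSeq_prepSeq] at h2
      have h3 := congrArg (dropSeq (lenP α)) h2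
      rwa [dropSeq_prepSeq, dropSeq_prepSeq] at h3
    have hξ0wf : InfWF S (dropSeq n ζ.1) := infWF_dropSeq S n ζ.1 ζ.2
    have hξ0r : S.r (dropSeq n ζ.1 0) = srcP S γ := by
      have h := srcP_takeP S ζ.1 n
      rw [htake, hsrcc] at h
      show S.r (ζ.1 (0 + n)) = srcP S γ
      rw [Nat.zero_add]
      exact h.symm
    have hgγ : actP S g γ = γ := by
      have h1 := key _ hξ0wf hξ0r
      have h2 := hact g (prepSeq γ (dropSeq n ζ.1)) (lenP γ)
      rw [h1, takeP_prepSeq S γ _ hξ0r] at h2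
      exact h2.symm
    refine ⟨γ, hwfγ, hgγ, hsrcγ, hInZ, ?_⟩
    intro η hηwf hηr
    have hηr' : S.r (η 0) = srcP S γ := hηr
    have hkey := key η hηwf hηr'
    apply eq_of_takeP_eq S
    intro m
    have h2 := hact g (prepSeq γ η) (lenP γ + m)
    rw [hkey, takeP_add S (prepSeq γ η) (lenP γ) m, takeP_prepSeq S γ η hηr',
      dropSeq_prepSeq, actP_compP, hgγ] at h2
    have h3 := compP_cancel h2
    rw [hact (phiP S g γ) η m]
    exact h3.symm
  · -- direction 2
    intro γ hwfγ hgγ hsrc H4 ζ hInZ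
    have H4' : ∀ η : ℕ → Ed, InfWF S η → S.r (η 0) = srcP S γ →
        act (phiP S g γ) η = η := fun η h1 h2 => H4 η h1 h2
    have hζ' : takeP S ζ.1 (lenP α + lenP γ) = compP α γ := by
      have h : takeP S ζ.1 (lenP (compP α γ)) = compP α γ := hInZ
      rwa [lenP_compP] at h
    have hfixζ := fixAux S act hact α γ g hsrc hgγ H4' ζ hζ'
    refine ⟨hfixζ, ?_⟩
    apply mem_interior.mpr
    refine ⟨{η : InfPath S | takeP S η.1 (lenP (compP α γ)) = compP α γ},
      ?_, ?_, ?_⟩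
    · intro η hη
      have hη' : takeP S η.1 (lenP α + lenP γ) = compP α γ := by
        have h : takeP S η.1 (lenP (compP α γ)) = compP α γ := hη
        rwa [lenP_compP] at h
      exact fixAux S act hact α γ g hsrc hgγ H4' η hη'
    · exact isOpen_cylinder S (compP α γ) ζ (by rw [lenP_compP]; exact hζ')
    · show takeP S ζ.1 (lenP (compP α γ)) = compP α γ
      rw [lenP_compP]; exact hζ'
end
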